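/- If K is complete with respect to C (convex bodies in R^n), then the joint chain holds: (1+s(K))·r(K,−C) ≤ r(K,−C) + R(K,C) ≤ ((1+s(K))/s(K))·R(K,C) ≤ s(C)·r(K,C) + R(K,C) ≤ (1/2)(1+s(C))·D(K,C). -/

import Mathlib

open Pointwise

/-- A convex body: compact, convex, with nonempty interior. -/
def IsBody {n : ℕ} (K : Set (Fin n → ℝ)) : Prop :=
  Convex ℝ K ∧ IsCompact K ∧ (interior K).Nonempty

/-- Circumradius of `K` w.r.t. `C`: smallest `ρ > 0` with `K` contained in a translate of `ρ • C`. -/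
noncomputable def circR {n : ℕ} (K C : Set (Fin n → ℝ)) : ℝ :=
  sInf {ρ : ℝ | 0 < ρ ∧ ∃ t : Fin n → ℝ, K ⊆ t +ᵥ ρ • C}

/-- Inradius of `K` w.r.t. `C`: largest `ρ ≥ 0` with a translate of `ρ • C` inside `K`. -/
noncomputable def inrad {n : ℕ} (K C : Set (Fin n → ℝ)) : ℝ :=
  sSup {ρ : ℝ | 0 ≤ ρ ∧ ∃ t : Fin n → ℝ, t +ᵥ ρ • C ⊆ K}

/-- Minkowski asymmetry `s(K) = R(-K, K)`. -/
noncomputable def asym {n : ℕ} (K : Set (Fin n → ℝ)) : ℝ := circR (-K) K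

/-- Diameter of `K` w.r.t. `C`: twice the maximal circumradius of a segment with endpoints in `K`. -/
noncomputable def diamC {n : ℕ} (K C : Set (Fin n → ℝ)) : ℝ :=
  sSup {d : ℝ | ∃ x ∈ K, ∃ y ∈ K, d = 2 * circR (segment ℝ x y) C}

/-- `K` is (diametrically) complete w.r.t. `C`. -/
def IsDiamComplete {n : ℕ} (K C : Set (Fin n → ℝ)) : Prop :=
  ∀ K' : Set (Fin n → ℝ), IsBody K' → K ⊂ K' → diamC K C < diamC K' C

/-- `S` is an `n`-simplex: convex hull of `n+1` affinely independent points. -/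
def IsSimplexBody {n : ℕ} (S : Set (Fin n → ℝ)) : Prop :=
  ∃ p : Fin (n + 1) → (Fin n → ℝ), AffineIndependent ℝ p ∧ S = convexHull ℝ (Set.range p)

/-- Support function of `C`. -/
noncomputable def supp {n : ℕ} (C : Set (Fin n → ℝ)) (a : Fin n → ℝ) : ℝ :=
  sSup {r : ℝ | ∃ x ∈ C, r = dotProduct a x}

/-- `A ⊆ₜ B`: `A` is contained in some translate of `B`. -/
def SubsetT {n : ℕ} (A B : Set (Fin n → ℝ)) : Prop := ∃ t : Fin n → ℝ, A ⊆ t +ᵥ B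


/-!
Write `s = s(K)`, `R = R(K,C)`, `r = r(K,C)`, `D = D(K,C)`. The first two inequalities both say
`s · r(K,-C) ≤ R`, true for every body: if `ρ(-C) ⊆ K ⊆ μC` up to translations, then
`-K ⊆ μ(-C) = (μ/ρ)(ρ(-C)) ⊆ (μ/ρ)K`. The last one, `s(C) r + R ≤ (1+s(C)) D/2`, also holds for
every body: from `ρC ⊆ K` and `K - K ⊆ (D/2)(C - C)`, Rådström cancellation of `ρ(-C)` puts `K` in
a translate of `(D/2)C + (D/2 - ρ)(-C) ⊆ (D/2 + s(C)(D/2 - ρ))C`.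

The middle inequality is `R ≤ s · s(C) · r`, and it is where completeness enters. It is proved by
passing through the difference body `C - C`, using `C - C ⊆ (1+s(C))C` and
`(1+s(C))C ⊆ s(C)(C - C)` up to translations, the diameter bound
`2(1+s) R(K,C-C) ≤ s D`, and the completeness inequality `D/2 ≤ r(K,C-C) + R(K,C-C)`.
The diameter is read through the gauge of `C - C`: `D = sup {2 gauge_{C-C}(y - x) | x, y ∈ K}`.
-/

open Set Metric Bornology Filter Topology

lemma le_mul_csInf {S : Set ℝ} (hS : S.Nonempty) {a c : ℝ} (hc : 0 ≤ c)
    (h : ∀ σ ∈ S, a ≤ c * σ) : a ≤ c * sInf S := by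
  rw [← smul_eq_mul, ← Real.sInf_smul_of_nonneg hc]
  exact le_csInf hS.smul_set (by rintro _ ⟨σ, hσ, rfl⟩; exact h σ hσ)

lemma mul_csSup_le {S : Set ℝ} (hS : S.Nonempty) {b c : ℝ} (hc : 0 ≤ c)
    (h : ∀ ρ ∈ S, c * ρ ≤ b) : c * sSup S ≤ b := by
  rw [← smul_eq_mul, ← Real.sSup_smul_of_nonneg hc]
  exact csSup_le hS.smul_set (by rintro _ ⟨ρ, hρ, rfl⟩; exact h ρ hρ)

section Pointwise

variable {E : Type*} [AddCommGroup E] [Module ℝ E]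

lemma Set.smul_set_sub (a : ℝ) (s t : Set E) : a • (s - t) = a • s - a • t := by
  rw [sub_eq_add_neg, smul_add, smul_set_neg, ← sub_eq_add_neg]

lemma neg_mem_smul_sub_self {C : Set E} {μ : ℝ} {v : E} (hv : v ∈ μ • (C - C)) :
    -v ∈ μ • (C - C) := by
  obtain ⟨_, ⟨a, ha, b, hb, rfl⟩, rfl⟩ := hv
  exact ⟨b - a, sub_mem_sub hb ha, by rw [← smul_neg, neg_sub]⟩

-- Rådström's cancellation law.
theorem Convex.subset_of_add_subset_add [TopologicalSpace E] [IsTopologicalAddGroup E]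
    [ContinuousSMul ℝ E] [LocallyConvexSpace ℝ E] {X Y Z : Set E} (hY : Convex ℝ Y)
    (hYc : IsClosed Y) (hZ : IsCompact Z) (hZne : Z.Nonempty) (h : X + Z ⊆ Y + Z) :
    X ⊆ Y := by
  intro x hx
  by_contra hxY
  obtain ⟨f, u, hfY, hfx⟩ := geometric_hahn_banach_closed_point hY hYc hxY
  obtain ⟨z, hz, hmax⟩ := hZ.exists_isMaxOn hZne f.continuous.continuousOn
  obtain ⟨y, hy, z', hz', he⟩ := h (add_mem_add hx hz)
  have hfe : f y + f z' = f x + f z := by rw [← map_add, ← map_add]; exact congrArg f he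
  linarith [hfY y hy, show f z' ≤ f z from hmax hz']

end Pointwise

theorem le_of_smul_subset_smul {E : Type*} [NormedAddCommGroup E] [NormedSpace ℝ E]
    {B : Set E} (hB : IsCompact B) {b : E} (hb : b ∈ B) (hb₀ : b ≠ 0) {ρ μ : ℝ} (hμ : 0 ≤ μ)
    (h : ρ • B ⊆ μ • B) : ρ ≤ μ := by
  obtain ⟨b₀, hb₀B, hmax⟩ := hB.exists_isMaxOn ⟨b, hb⟩ continuous_norm.continuousOn
  have hpos : 0 < ‖b₀‖ := (norm_pos_iff.2 hb₀).trans_le (hmax hb)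
  obtain ⟨b', hb', he⟩ := h (smul_mem_smul_set hb₀B)
  have : |ρ| * ‖b₀‖ ≤ μ * ‖b₀‖ :=
    calc |ρ| * ‖b₀‖ = μ * ‖b'‖ := by rw [← Real.norm_eq_abs, ← norm_smul, ← he, norm_smul,
          Real.norm_of_nonneg hμ]
      _ ≤ μ * ‖b₀‖ := mul_le_mul_of_nonneg_left (hmax hb') hμ
  exact (le_abs_self ρ).trans (le_of_mul_le_mul_right this hpos)

section Bodies

variable {n : ℕ}

namespace SubsetT

variable {A A' B B' D : Set (Fin n → ℝ)}

lemma of_subset (h : A ⊆ B) : SubsetT A B := ⟨0, by rwa [zero_vadd]⟩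

lemma refl (A : Set (Fin n → ℝ)) : SubsetT A A := of_subset subset_rfl

lemma trans (h₁ : SubsetT A B) (h₂ : SubsetT B D) : SubsetT A D := by
  obtain ⟨t, ht⟩ := h₁
  obtain ⟨u, hu⟩ := h₂
  exact ⟨t + u, ht.trans ((vadd_set_mono hu).trans (vadd_vadd t u D).subset)⟩

lemma smul (h : SubsetT A B) (a : ℝ) : SubsetT (a • A) (a • B) := by
  obtain ⟨t, ht⟩ := h
  refine ⟨a • t, ?_⟩
  rintro _ ⟨x, hx, rfl⟩
  obtain ⟨b, hb, rfl⟩ := ht hx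
  exact ⟨a • b, smul_mem_smul_set hb, by simp [smul_add]⟩

lemma neg (h : SubsetT A B) : SubsetT (-A) (-B) := by
  obtain ⟨t, ht⟩ := h
  refine ⟨-t, fun x hx => ?_⟩
  obtain ⟨b, hb, hbx⟩ := ht hx
  exact ⟨-b, neg_mem_neg.2 hb, by simp only [vadd_eq_add] at hbx ⊢; rw [← neg_add, hbx, neg_neg]⟩

lemma add (h : SubsetT A B) (h' : SubsetT A' B') : SubsetT (A + A') (B + B') := by
  obtain ⟨t, ht⟩ := h
  obtain ⟨t', ht'⟩ := h'
  exact ⟨t + t', (add_subset_add ht ht').trans (vadd_add_vadd t B t' B').subset⟩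

lemma sub_subset_sub (h : SubsetT A B) : A - A ⊆ B - B := by
  obtain ⟨t, ht⟩ := h
  rintro _ ⟨x, hx, y, hy, rfl⟩
  obtain ⟨b, hb, rfl⟩ := ht hx
  obtain ⟨b', hb', rfl⟩ := ht hy
  exact ⟨b, hb, b', hb', by simp⟩

end SubsetT

lemma subsetT_iff_exists_vadd_subset {A B : Set (Fin n → ℝ)} :
    SubsetT A B ↔ ∃ t : Fin n → ℝ, t +ᵥ A ⊆ B := by
  refine ⟨fun ⟨t, ht⟩ => ⟨-t, ?_⟩, fun ⟨t, ht⟩ => ⟨-t, ?_⟩⟩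
  · rwa [vadd_set_subset_iff_subset_neg_vadd_set, neg_neg]
  · rwa [← vadd_set_subset_iff_subset_neg_vadd_set]

namespace IsBody

variable {C : Set (Fin n → ℝ)}

lemma nonempty (hC : IsBody C) : C.Nonempty := hC.2.2.mono interior_subset

lemma exists_neg_vadd_mem_nhds_zero (hC : IsBody C) :
    ∃ c ∈ C, (-c) +ᵥ C ∈ 𝓝 (0 : Fin n → ℝ) := by
  obtain ⟨c, hc⟩ := hC.2.2
  refine ⟨c, interior_subset hc, ?_⟩
  simpa using vadd_mem_nhds_vadd (-c) (mem_interior_iff_mem_nhds.1 hc)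

lemma sub_self_mem_nhds_zero (hC : IsBody C) : C - C ∈ 𝓝 (0 : Fin n → ℝ) := by
  obtain ⟨c, hc, hU⟩ := hC.exists_neg_vadd_mem_nhds_zero
  refine mem_of_superset hU ?_
  rintro _ ⟨x, hx, rfl⟩
  exact ⟨x, hx, c, hc, (neg_add_eq_sub c x).symm⟩

lemma sub_self (hC : IsBody C) : IsBody (C - C) :=
  ⟨hC.1.sub hC.1, by simpa only [sub_eq_add_neg] using hC.2.1.add hC.2.1.neg,
    ⟨0, mem_interior_iff_mem_nhds.2 hC.sub_self_mem_nhds_zero⟩⟩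

lemma exists_ne_zero_mem_sub_self [Nontrivial (Fin n → ℝ)] (hC : IsBody C) :
    ∃ b ∈ C - C, b ≠ 0 :=
  let ⟨b, hb, hb₀⟩ := Filter.nonempty_of_mem
    (inter_mem (mem_nhdsWithin_of_mem_nhds hC.sub_self_mem_nhds_zero)
      (self_mem_nhdsWithin : {0}ᶜ ∈ 𝓝[≠] (0 : Fin n → ℝ)))
  ⟨b, hb, hb₀⟩

lemma le_of_smul_sub_self_subset [Nontrivial (Fin n → ℝ)] (hC : IsBody C) {ρ μ : ℝ}
    (hμ : 0 ≤ μ) (h : ρ • (C - C) ⊆ μ • (C - C)) : ρ ≤ μ :=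
  let ⟨_, hb, hb₀⟩ := hC.exists_ne_zero_mem_sub_self
  le_of_smul_subset_smul hC.sub_self.2.1 hb hb₀ hμ h

lemma le_of_subsetT_smul [Nontrivial (Fin n → ℝ)] (hC : IsBody C) {ρ μ : ℝ} (hμ : 0 ≤ μ)
    (h : SubsetT (ρ • C) (μ • C)) : ρ ≤ μ :=
  hC.le_of_smul_sub_self_subset hμ (by simpa only [Set.smul_set_sub] using h.sub_subset_sub)

end IsBody

variable {K C : Set (Fin n → ℝ)}

lemma exists_subsetT_smul (hK : IsBounded K) (hC : IsBody C) :
    ∃ ρ : ℝ, 0 < ρ ∧ SubsetT K (ρ • C) := by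
  obtain ⟨c, -, hU⟩ := hC.exists_neg_vadd_mem_nhds_zero
  obtain ⟨r, hr, hKr⟩ := ((NormedSpace.isVonNBounded_iff ℝ).2 hK hU).exists_pos
  refine ⟨r, hr, r • -c, (hKr r (Real.le_norm_self r)).trans ?_⟩
  rintro _ ⟨_, ⟨x, hx, rfl⟩, rfl⟩
  exact ⟨r • x, smul_mem_smul_set hx, by simp [smul_add]⟩

lemma circR_nonneg (K C : Set (Fin n → ℝ)) : 0 ≤ circR K C :=
  Real.sInf_nonneg fun _ h => h.1.le

lemma asym_nonneg (K : Set (Fin n → ℝ)) : 0 ≤ asym K := circR_nonneg _ _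

lemma inrad_nonneg (K C : Set (Fin n → ℝ)) : 0 ≤ inrad K C :=
  Real.sSup_nonneg fun _ h => h.1

lemma diamC_nonneg (K C : Set (Fin n → ℝ)) : 0 ≤ diamC K C :=
  Real.sSup_nonneg <| by
    rintro _ ⟨x, -, y, -, rfl⟩
    exact mul_nonneg zero_le_two (circR_nonneg _ _)

lemma circR_eq (K C : Set (Fin n → ℝ)) :
    circR K C = sInf {ρ : ℝ | 0 < ρ ∧ SubsetT K (ρ • C)} := rfl

lemma circR_le {ρ : ℝ} (hρ : 0 < ρ) (h : SubsetT K (ρ • C)) : circR K C ≤ ρ :=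
  csInf_le ⟨0, fun _ h => h.1.le⟩ ⟨hρ, h⟩

lemma le_mul_circR (hK : IsBounded K) (hC : IsBody C) {a c : ℝ} (hc : 0 ≤ c)
    (h : ∀ ρ : ℝ, 0 < ρ → SubsetT K (ρ • C) → a ≤ c * ρ) : a ≤ c * circR K C := by
  rw [circR_eq]
  exact le_mul_csInf (exists_subsetT_smul hK hC) hc fun ρ hρ => h ρ hρ.1 hρ.2

lemma le_mul_asym (hC : IsBody C) {a c : ℝ} (hc : 0 ≤ c)
    (h : ∀ σ : ℝ, 0 < σ → SubsetT (-C) (σ • C) → a ≤ c * σ) : a ≤ c * asym C :=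
  le_mul_circR hC.2.1.neg.isBounded hC hc h

lemma one_le_asym [Nontrivial (Fin n → ℝ)] (hC : IsBody C) : 1 ≤ asym C := by
  simpa using le_mul_asym hC zero_le_one fun σ hσ h => by
    simpa using hC.le_of_smul_sub_self_subset hσ.le (by
      simpa only [one_smul, neg_sub_neg, Set.smul_set_sub] using h.sub_subset_sub)

lemma inrad_eq (K C : Set (Fin n → ℝ)) :
    inrad K C = sSup {ρ : ℝ | 0 ≤ ρ ∧ SubsetT (ρ • C) K} := by
  simp_rw [inrad, subsetT_iff_exists_vadd_subset]

lemma le_inrad [Nontrivial (Fin n → ℝ)] (hK : IsBounded K) (hC : IsBody C) {ρ : ℝ}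
    (hρ : 0 ≤ ρ) (h : SubsetT (ρ • C) K) : ρ ≤ inrad K C := by
  obtain ⟨μ, hμ, hKμ⟩ := exists_subsetT_smul hK hC
  rw [inrad_eq]
  exact le_csSup ⟨μ, fun ρ' hρ' => hC.le_of_subsetT_smul hμ.le (hρ'.2.trans hKμ)⟩ ⟨hρ, h⟩

lemma mul_inrad_le (hK : K.Nonempty) (hC : C.Nonempty) {b c : ℝ} (hc : 0 ≤ c)
    (h : ∀ ρ, 0 ≤ ρ → SubsetT (ρ • C) K → c * ρ ≤ b) : c * inrad K C ≤ b := by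
  obtain ⟨k, hk⟩ := hK
  have h₀ : (0 : ℝ) ∈ {ρ : ℝ | 0 ≤ ρ ∧ SubsetT (ρ • C) K} :=
    ⟨le_rfl, -k, by rw [zero_smul_set hC, zero_subset]; exact ⟨k, hk, neg_add_cancel k⟩⟩
  rw [inrad_eq]
  exact mul_csSup_le ⟨0, h₀⟩ hc fun ρ hρ => h ρ hρ.1 hρ.2

lemma circR_segment (hC : Convex ℝ C) (x y : Fin n → ℝ) :
    circR (segment ℝ x y) C = gauge (C - C) (y - x) := by
  rw [circR, gauge_def]
  congr 1
  ext ρ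
  simp only [mem_ofPred_eq, mem_Ioi]
  refine and_congr_right fun _ => ⟨?_, ?_⟩
  · rintro ⟨t, ht⟩
    obtain ⟨_, ⟨d₁, hd₁, rfl⟩, hx⟩ := ht (left_mem_segment ℝ x y)
    obtain ⟨_, ⟨d₂, hd₂, rfl⟩, hy⟩ := ht (right_mem_segment ℝ x y)
    refine ⟨d₂ - d₁, sub_mem_sub hd₂ hd₁, ?_⟩
    simp only [← hx, ← hy, vadd_eq_add]
    module
  · rintro ⟨_, ⟨d₂, hd₂, d₁, hd₁, rfl⟩, he⟩
    refine ⟨x - ρ • d₁, ((hC.smul ρ).vadd _).segment_subset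
      ⟨ρ • d₁, smul_mem_smul_set hd₁, by simp⟩ ⟨ρ • d₂, smul_mem_smul_set hd₂, ?_⟩⟩
    show x - ρ • d₁ + ρ • d₂ = y
    calc x - ρ • d₁ + ρ • d₂ = x + ρ • (d₂ - d₁) := by module
      _ = y := by rw [show ρ • (d₂ - d₁) = y - x from he]; abel

lemma two_mul_circR_segment_le (hC : Convex ℝ C) {μ : ℝ} (hμ : 0 ≤ μ)
    (h : K - K ⊆ μ • (C - C)) {x y : Fin n → ℝ} (hx : x ∈ K) (hy : y ∈ K) :
    2 * circR (segment ℝ x y) C ≤ 2 * μ := by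
  rw [circR_segment hC]
  linarith [gauge_le_of_mem hμ (h (sub_mem_sub hy hx))]

lemma diamC_le (hC : Convex ℝ C) (hK : K.Nonempty) {μ : ℝ} (hμ : 0 ≤ μ)
    (h : K - K ⊆ μ • (C - C)) : diamC K C ≤ 2 * μ := by
  obtain ⟨k, hk⟩ := hK
  refine csSup_le ⟨_, k, hk, k, hk, rfl⟩ ?_
  rintro _ ⟨x, hx, y, hy, rfl⟩
  exact two_mul_circR_segment_le hC hμ h hx hy

lemma two_mul_gauge_le_diamC (hK : IsBody K) (hC : IsBody C) {x y : Fin n → ℝ}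
    (hx : x ∈ K) (hy : y ∈ K) : 2 * gauge (C - C) (y - x) ≤ diamC K C := by
  obtain ⟨μ, hμ, hKμ⟩ := exists_subsetT_smul hK.2.1.isBounded hC
  have hsub : K - K ⊆ μ • (C - C) := by
    simpa only [Set.smul_set_sub] using hKμ.sub_subset_sub
  rw [← circR_segment hC.1]
  refine le_csSup ⟨2 * μ, ?_⟩ ⟨x, hx, y, hy, rfl⟩
  rintro _ ⟨x, hx, y, hy, rfl⟩
  exact two_mul_circR_segment_le hC.1 hμ.le hsub hx hy

lemma diamC_pos [Nontrivial (Fin n → ℝ)] (hK : IsBody K) (hC : IsBody C) : 0 < diamC K C := by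
  obtain ⟨_, ⟨y, hy, x, hx, rfl⟩, hne⟩ := hK.exists_ne_zero_mem_sub_self
  have hpos : 0 < gauge (C - C) (y - x) :=
    (gauge_pos (absorbent_nhds_zero hC.sub_self_mem_nhds_zero)
      ((NormedSpace.isVonNBounded_iff ℝ).2 hC.sub_self.2.1.isBounded)).2 hne
  linarith [two_mul_gauge_le_diamC hK hC hx hy]

lemma sub_subset_half_diamC_smul [Nontrivial (Fin n → ℝ)] (hK : IsBody K) (hC : IsBody C) :
    K - K ⊆ (diamC K C / 2) • (C - C) := by
  rintro _ ⟨y, hy, x, hx, rfl⟩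
  have hD : 0 < diamC K C / 2 := half_pos (diamC_pos hK hC)
  rw [mem_smul_set_iff_inv_smul_mem₀ hD.ne', ← hC.sub_self.2.1.isClosed.closure_eq,
    ← gauge_le_one_iff_mem_closure hC.sub_self.1 hC.sub_self_mem_nhds_zero,
    gauge_smul_of_nonneg (inv_nonneg.2 hD.le), smul_eq_mul, inv_mul_le_iff₀ hD]
  linarith [two_mul_gauge_le_diamC hK hC hx hy]

lemma le_half_diamC [Nontrivial (Fin n → ℝ)] (hK : IsBody K) (hC : IsBody C) {ρ : ℝ}
    (h : SubsetT (ρ • C) K) : ρ ≤ diamC K C / 2 := by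
  refine hC.le_of_smul_sub_self_subset (by linarith [diamC_nonneg K C]) ?_
  rw [Set.smul_set_sub]
  exact h.sub_subset_sub.trans (sub_subset_half_diamC_smul hK hC)

lemma IsBody.convexHull_insert (hK : IsBody K) (p : Fin n → ℝ) :
    IsBody (convexHull ℝ (insert p K)) := by
  have hJ : convexHull ℝ (insert p K) =
      (fun q : ℝ × (Fin n → ℝ) => (1 - q.1) • p + q.1 • q.2) '' (Icc 0 1 ×ˢ K) := by
    rw [_root_.convexHull_insert hK.nonempty, hK.1.convexHull_eq, convexJoin_singleton_left]
    ext v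
    simp only [mem_iUnion, segment_eq_image, mem_image, mem_prod, Prod.exists, exists_prop]
    constructor
    · rintro ⟨z, hz, θ, hθ, rfl⟩
      exact ⟨θ, z, ⟨hθ, hz⟩, rfl⟩
    · rintro ⟨θ, z, ⟨hθ, hz⟩, rfl⟩
      exact ⟨z, hz, θ, hθ, rfl⟩
  refine ⟨convex_convexHull ℝ _, ?_, hK.2.2.mono (interior_mono
    ((subset_insert p K).trans (subset_convexHull ℝ _)))⟩
  rw [hJ]
  exact (isCompact_Icc.prod hK.2.1).image (by fun_prop)

lemma IsDiamComplete.exists_sub_notMem_smul [Nontrivial (Fin n → ℝ)]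
    (hcomp : IsDiamComplete K C) (hK : IsBody K) (hC : IsBody C) {p : Fin n → ℝ} (hp : p ∉ K) :
    ∃ y ∈ K, p - y ∉ (diamC K C / 2) • (C - C) := by
  -- Otherwise `convexHull ℝ (insert p K)` would be a larger body of the same diameter.
  by_contra! hfar
  obtain ⟨c, hc⟩ := hC.nonempty
  have hS : insert p K - insert p K ⊆ (diamC K C / 2) • (C - C) := by
    rintro _ ⟨a, ha, b, hb, rfl⟩
    dsimp only
    rcases ha with rfl | ha <;> rcases hb with rfl | hb
    · rw [sub_self]
      exact zero_mem_smul_set ⟨c, hc, c, hc, sub_self c⟩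
    · exact hfar b hb
    · simpa using neg_mem_smul_sub_self (hfar a ha)
    · exact sub_subset_half_diamC_smul hK hC (sub_mem_sub ha hb)
  have hle : diamC (convexHull ℝ (insert p K)) C ≤ diamC K C := by
    have := diamC_le hC.1 ((insert_nonempty p K).mono (subset_convexHull ℝ _))
      (half_pos (diamC_pos hK hC)).le
      (by rw [← convexHull_sub]; exact convexHull_min hS ((hC.1.sub hC.1).smul _))
    linarith
  have hsub : K ⊂ convexHull ℝ (insert p K) :=
    ⟨(subset_insert p K).trans (subset_convexHull ℝ _),
      fun h => hp (h (subset_convexHull ℝ _ (mem_insert p K)))⟩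
  exact (hcomp _ (hK.convexHull_insert p) hsub).not_ge hle

theorem IsDiamComplete.half_diamC_le [Nontrivial (Fin n → ℝ)] (hcomp : IsDiamComplete K C)
    (hK : IsBody K) (hC : IsBody C) :
    diamC K C / 2 ≤ inrad K (C - C) + circR K (C - C) := by
  set μ := diamC K C / 2
  suffices h : μ - inrad K (C - C) ≤ 1 * circR K (C - C) by linarith
  refine le_mul_circR hK.2.1.isBounded hC.sub_self zero_le_one fun ρ hρ hKρ => ?_
  rcases le_or_gt μ ρ with hμρ | hρμ
  · linarith [inrad_nonneg K (C - C)]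
  -- A point `v ∉ K` of `z + (μ - ρ)(C - C)` would be `μ`-far from some `y ∈ K`, but `y` lies in
  -- `z + ρ(C - C)`, so `v - y ∈ (μ - ρ)(C - C) + ρ(C - C) = μ(C - C)`.
  suffices h : SubsetT ((μ - ρ) • (C - C)) K by
    linarith [le_inrad hK.2.1.isBounded hC.sub_self (sub_nonneg.2 hρμ.le) h]
  obtain ⟨z, hz⟩ := hKρ
  refine subsetT_iff_exists_vadd_subset.2 ⟨z, fun v hv => ?_⟩
  by_contra hvK
  obtain ⟨y, hy, hvy⟩ := hcomp.exists_sub_notMem_smul hK hC hvK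
  obtain ⟨w, hw, rfl⟩ := hv
  obtain ⟨u, hu, rfl⟩ := hz hy
  have hsplit : μ • (C - C) = (μ - ρ) • (C - C) + ρ • (C - C) := by
    rw [← (hC.1.sub hC.1).add_smul (sub_nonneg.2 hρμ.le) hρ.le, sub_add_cancel]
  refine hvy ?_
  dsimp only
  rw [hsplit, show (z +ᵥ w) - (z +ᵥ u) = w + -u by simp only [vadd_eq_add]; abel]
  exact add_mem_add hw (neg_mem_smul_sub_self hu)

lemma subsetT_sub_self_smul (hC : Convex ℝ C) {σ : ℝ} (hσ : 0 ≤ σ)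
    (h : SubsetT (-C) (σ • C)) : SubsetT (C - C) ((1 + σ) • C) := by
  rw [sub_eq_add_neg, hC.add_smul zero_le_one hσ, one_smul]
  exact (SubsetT.refl C).add h

lemma subsetT_smul_smul_sub_self (hC : Convex ℝ C) {σ : ℝ} (hσ : 0 ≤ σ)
    (h : SubsetT (-C) (σ • C)) : SubsetT ((1 + σ) • C) (σ • (C - C)) := by
  have hneg : SubsetT C (σ • -C) := by simpa [smul_set_neg] using h.neg
  rw [hC.add_smul zero_le_one hσ, one_smul, sub_eq_add_neg, smul_add, add_comm (σ • C)]
  exact hneg.add (SubsetT.refl _)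

lemma asym_mul_inrad_neg_le (hK : IsBody K) (hC : IsBody C) :
    asym K * inrad K (-C) ≤ circR K C := by
  refine mul_inrad_le hK.nonempty hC.nonempty.neg (asym_nonneg K) fun ρ hρ hKρ => ?_
  rcases hρ.eq_or_lt with rfl | hρ
  · simpa using circR_nonneg K C
  have key : ∀ μ : ℝ, 0 < μ → SubsetT K (μ • C) → asym K * ρ ≤ 1 * μ := by
    intro μ hμ hKμ
    have h := hKρ.smul (μ / ρ)
    rw [smul_smul, div_mul_cancel₀ μ hρ.ne', smul_set_neg] at h
    rw [one_mul, ← le_div_iff₀ hρ]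
    exact circR_le (div_pos hμ hρ) (hKμ.neg.trans h)
  simpa using le_mul_circR hK.2.1.isBounded hC zero_le_one key

lemma one_add_asym_mul_inrad_sub_self_le [Nontrivial (Fin n → ℝ)] (hK : IsBody K)
    (hC : IsBody C) : (1 + asym C) * inrad K (C - C) ≤ asym C * inrad K C := by
  set r := inrad K C
  refine mul_inrad_le hK.nonempty hC.sub_self.nonempty (by linarith [asym_nonneg C])
    fun ρ hρ hKρ => ?_
  have key : ∀ σ : ℝ, 0 < σ → SubsetT (-C) (σ • C) → ρ ≤ (r - ρ) * σ := by
    intro σ hσ hCσ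
    have h := (subsetT_smul_smul_sub_self hC.1 hσ.le hCσ).smul (σ⁻¹ * ρ)
    rw [smul_smul, smul_smul, show σ⁻¹ * ρ * σ = ρ by field_simp] at h
    have hr := le_inrad hK.2.1.isBounded hC (by positivity) (h.trans hKρ)
    have : ρ * (1 + σ) ≤ r * σ :=
      calc ρ * (1 + σ) = σ⁻¹ * ρ * (1 + σ) * σ := by field_simp
        _ ≤ r * σ := mul_le_mul_of_nonneg_right hr hσ.le
    linarith
  obtain ⟨σ, hσ, hCσ⟩ := exists_subsetT_smul hC.2.1.neg.isBounded hC
  have hr : 0 ≤ r - ρ := by nlinarith [key σ hσ hCσ]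
  linarith [le_mul_asym hC hr key]

lemma circR_le_one_add_asym_mul_circR_sub_self (hK : IsBody K) (hC : IsBody C) :
    circR K C ≤ (1 + asym C) * circR K (C - C) := by
  set RB := circR K (C - C)
  have key : ∀ σ : ℝ, 0 < σ → SubsetT (-C) (σ • C) → circR K C - RB ≤ RB * σ := by
    intro σ hσ hCσ
    have : circR K C ≤ (1 + σ) * RB :=
      le_mul_circR hK.2.1.isBounded hC.sub_self (by positivity) fun μ hμ hKμ => by
        have h := hKμ.trans ((subsetT_sub_self_smul hC.1 hσ.le hCσ).smul μ)
        rw [smul_smul] at h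
        rw [mul_comm]
        exact circR_le (by positivity) h
    linarith
  linarith [le_mul_asym hC (circR_nonneg K (C - C)) key]

lemma two_mul_one_add_asym_mul_circR_sub_self_le [Nontrivial (Fin n → ℝ)] (hK : IsBody K)
    (hC : IsBody C) : 2 * (1 + asym K) * circR K (C - C) ≤ asym K * diamC K C := by
  set D := diamC K C
  set RB := circR K (C - C)
  have hD : 0 < D := diamC_pos hK hC
  have key : ∀ σ : ℝ, 0 < σ → SubsetT (-K) (σ • K) → 2 * RB ≤ (D - 2 * RB) * σ := by
    intro σ hσ hKσ
    have h := ((subsetT_smul_smul_sub_self hK.1 hσ.le hKσ).trans (SubsetT.of_subset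
      (smul_set_mono (sub_subset_half_diamC_smul hK hC)))).smul (1 + σ)⁻¹
    simp only [smul_smul] at h
    rw [inv_mul_cancel₀ (by positivity), one_smul] at h
    have hRB := circR_le (by positivity) h
    have : RB * (1 + σ) ≤ σ * (D / 2) :=
      calc RB * (1 + σ) ≤ (1 + σ)⁻¹ * (σ * (D / 2)) * (1 + σ) :=
            mul_le_mul_of_nonneg_right hRB (by positivity)
        _ = σ * (D / 2) := by field_simp
    linarith
  obtain ⟨σ, hσ, hKσ⟩ := exists_subsetT_smul hK.2.1.neg.isBounded hK
  have hc : 0 ≤ D - 2 * RB := by nlinarith [key σ hσ hKσ, circR_nonneg K (C - C)]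
  linarith [le_mul_asym hK hc key]

lemma subsetT_half_diamC_smul_add [Nontrivial (Fin n → ℝ)] (hK : IsBody K) (hC : IsBody C)
    {ρ : ℝ} (hρ : 0 ≤ ρ) (h : SubsetT (ρ • C) K) :
    SubsetT K ((diamC K C / 2) • C + (diamC K C / 2 - ρ) • -C) := by
  set μ := diamC K C / 2
  have hρμ : ρ ≤ μ := le_half_diamC hK hC h
  obtain ⟨t, ht⟩ := subsetT_iff_exists_vadd_subset.1 h
  refine ⟨t, fun v hv => ⟨v - t, ?_, by simp⟩⟩
  have hY : Convex ℝ (μ • C + (μ - ρ) • -C) := (hC.1.smul μ).add (hC.1.neg.smul _)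
  have hYc : IsClosed (μ • C + (μ - ρ) • -C) :=
    ((hC.2.1.smul μ).add (hC.2.1.neg.smul _)).isClosed
  refine hY.subset_of_add_subset_add hYc (hC.2.1.neg.smul ρ) hC.nonempty.neg.smul_set ?_
    (mem_singleton (v - t))
  -- `(v - t) + ρ • -C ⊆ v - K ⊆ μ • (C - C) = μ • C + μ • -C`
  rw [add_assoc, ← hC.1.neg.add_smul (sub_nonneg.2 hρμ) hρ, sub_add_cancel]
  rintro _ ⟨_, rfl, _, ⟨c, hc, rfl⟩, rfl⟩
  have hw : t + ρ • -c ∈ K := ht ⟨ρ • -c, smul_mem_smul_set (mem_neg.1 hc), rfl⟩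
  have := sub_subset_half_diamC_smul hK hC (sub_mem_sub hv hw)
  rw [sub_eq_add_neg C C, smul_add] at this
  convert this using 1
  simp only [smul_neg]
  abel

lemma asym_mul_inrad_add_circR_le [Nontrivial (Fin n → ℝ)] (hK : IsBody K) (hC : IsBody C) :
    asym C * inrad K C + circR K C ≤ (1 + asym C) * (diamC K C / 2) := by
  set μ := diamC K C / 2
  have hμ : 0 < μ := half_pos (diamC_pos hK hC)
  have key : ∀ ρ, 0 ≤ ρ → SubsetT (ρ • C) K → asym C * ρ ≤ (1 + asym C) * μ - circR K C := by
    intro ρ hρ hKρ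
    have hρμ : 0 ≤ μ - ρ := sub_nonneg.2 (le_half_diamC hK hC hKρ)
    have : circR K C - μ ≤ (μ - ρ) * asym C := le_mul_asym hC hρμ fun σ hσ hCσ => by
      have hσ' : 0 ≤ (μ - ρ) * σ := mul_nonneg hρμ hσ.le
      have h : SubsetT K ((μ + (μ - ρ) * σ) • C) := by
        refine (subsetT_half_diamC_smul_add hK hC hρ hKρ).trans ?_
        rw [hC.1.add_smul hμ.le hσ', ← smul_smul]
        exact (SubsetT.refl _).add (hCσ.smul (μ - ρ))
      linarith [circR_le (add_pos_of_pos_of_nonneg hμ hσ') h]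
    linarith
  linarith [mul_inrad_le hK.nonempty hC.nonempty (asym_nonneg C) key]

theorem IsDiamComplete.circR_le_asym_mul_asym_mul_inrad [Nontrivial (Fin n → ℝ)]
    (hcomp : IsDiamComplete K C) (hK : IsBody K) (hC : IsBody C) :
    circR K C ≤ asym K * (asym C * inrad K C) := by
  set s := asym K
  set sC := asym C
  set RB := circR K (C - C)
  have hs : 0 ≤ s := asym_nonneg K
  have hsC : 0 ≤ 1 + sC := by linarith [asym_nonneg C]
  have hRB : RB ≤ s * (diamC K C / 2 - RB) := by
    linarith [two_mul_one_add_asym_mul_circR_sub_self_le hK hC]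
  calc circR K C ≤ (1 + sC) * RB := circR_le_one_add_asym_mul_circR_sub_self hK hC
    _ ≤ (1 + sC) * (s * (diamC K C / 2 - RB)) := mul_le_mul_of_nonneg_left hRB hsC
    _ = s * ((1 + sC) * (diamC K C / 2 - RB)) := by ring
    _ ≤ s * ((1 + sC) * inrad K (C - C)) := by
        refine mul_le_mul_of_nonneg_left (mul_le_mul_of_nonneg_left ?_ hsC) hs
        linarith [hcomp.half_diamC_le hK hC]
    _ ≤ s * (sC * inrad K C) :=
        mul_le_mul_of_nonneg_left (one_add_asym_mul_inrad_sub_self_le hK hC) hs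

lemma circR_eq_zero_of_subsingleton [Subsingleton (Fin n → ℝ)] (K : Set (Fin n → ℝ))
    (hC : C.Nonempty) : circR K C = 0 := by
  have : {ρ : ℝ | 0 < ρ ∧ SubsetT K (ρ • C)} = Ioi 0 := by
    ext ρ
    refine and_iff_left_of_imp fun _ => ⟨0, ?_⟩
    rw [hC.smul_set.vadd_set.eq_univ]
    exact subset_univ K
  rw [circR_eq, this, csInf_Ioi]

lemma inrad_eq_zero_of_subsingleton [Subsingleton (Fin n → ℝ)] (hK : K.Nonempty)
    (C : Set (Fin n → ℝ)) : inrad K C = 0 := by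
  have : {ρ : ℝ | 0 ≤ ρ ∧ SubsetT (ρ • C) K} = Ici 0 := by
    ext ρ
    refine and_iff_left_of_imp fun _ => ⟨0, ?_⟩
    rw [hK.vadd_set.eq_univ]
    exact subset_univ _
  rw [inrad_eq, this, Real.sSup_of_not_bddAbove (not_bddAbove_Ici 0)]

end Bodies

theorem stmt11 {n : ℕ} (K C : Set (Fin n → ℝ)) (hK : IsBody K) (hC : IsBody C)
    (hcomp : IsDiamComplete K C) :
    (1 + asym K) * inrad K (-C) ≤ inrad K (-C) + circR K C ∧
    inrad K (-C) + circR K C ≤ ((1 + asym K) / asym K) * circR K C ∧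
    ((1 + asym K) / asym K) * circR K C ≤ asym C * inrad K C + circR K C ∧
    asym C * inrad K C + circR K C ≤ (1 / 2) * (1 + asym C) * diamC K C := by
  rcases subsingleton_or_nontrivial (Fin n → ℝ) with hE | hE
  · -- In dimension zero `asym` vanishes, so `(1 + asym K) / asym K = 0`.
    have hK₀ : asym K = 0 := circR_eq_zero_of_subsingleton _ hK.nonempty
    have hC₀ : asym C = 0 := circR_eq_zero_of_subsingleton _ hC.nonempty
    rw [hK₀, hC₀, circR_eq_zero_of_subsingleton K hC.nonempty,
      inrad_eq_zero_of_subsingleton hK.nonempty]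
    norm_num [diamC_nonneg K C]
  · have hs : 0 < asym K := one_pos.trans_le (one_le_asym hK)
    have hA := asym_mul_inrad_neg_le hK hC
    have hR := hcomp.circR_le_asym_mul_asym_mul_inrad hK hC
    have hD := asym_mul_inrad_add_circR_le hK hC
    have hsplit : (1 + asym K) / asym K * circR K C = circR K C / asym K + circR K C := by
      field_simp
    have hrm : inrad K (-C) ≤ circR K C / asym K := (le_div_iff₀ hs).2 (by linarith)
    have hRs : circR K C / asym K ≤ asym C * inrad K C := (div_le_iff₀ hs).2 (by linarith)
    exact ⟨by linarith, by linarith, by linarith, by linarith⟩
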